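/- Let φ : X → ℝ ∪ {∞} be a proper convex function and (x̄, v̄) ∈ gph ∂φ. If φ satisfies the quadratic growth condition at x̄ for v̄, then the kernel of the second subderivative equals the tangent cone to ∂φ*(v̄) at x̄: {w : d²φ(x̄|v̄)(w) = 0} = T_{∂φ*(v̄)}(x̄). -/

import Mathlib

open Filter Topology Metric Set
open scoped RealInnerProductSpace NNReal ENNReal

noncomputable section

/-- Bouligand (contingent) tangent cone. -/
def tanCone {G : Type*} [AddCommGroup G] [Module ℝ G] [TopologicalSpace G]
    (s : Set G) (x : G) : Set G :=
  {w | ∃ (t : ℕ → ℝ) (wk : ℕ → G), (∀ n, 0 < t n) ∧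
    Tendsto t atTop (𝓝 0) ∧ Tendsto wk atTop (𝓝 w) ∧ ∀ n, x + t n • wk n ∈ s}

variable {E F : Type*} [NormedAddCommGroup E] [InnerProductSpace ℝ E]
  [NormedAddCommGroup F] [InnerProductSpace ℝ F]

/-- Graph of a set-valued mapping. -/
def gph (S : E → Set F) : Set (E × F) := {p | p.2 ∈ S p.1}

/-- Graphical derivative. -/
def gder (S : E → Set F) (x : E) (y : F) (w : E) : Set F :=
  {z | (w, z) ∈ tanCone (gph S) (x, y)}

/-- Local closedness of the graph around a point. -/
def LocallyClosedGraph (S : E → Set F) (x : E) (y : F) : Prop :=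
  ∃ U ∈ 𝓝 ((x, y) : E × F), IsClosed (U ∩ gph S)

/-- Metric subregularity of a set-valued mapping at `x` for `y`. -/
def MetrSubreg (S : E → Set F) (x : E) (y : F) : Prop :=
  ∃ κ : ℝ≥0, ∃ ε : ℝ, 0 < ε ∧ ∀ x' ∈ ball x ε,
    EMetric.infEdist x' {u | y ∈ S u} ≤ (κ : ℝ≥0∞) * EMetric.infEdist y (S x')

/-- Convex subdifferential of an extended-real-valued function. -/
def subdiff (φ : E → EReal) (x : E) : Set E :=
  {v | ∀ u, φ x + ((⟪v, u - x⟫ : ℝ) : EReal) ≤ φ u}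

/-- Properness. -/
def ProperFn (φ : E → EReal) : Prop := (∀ x, φ x ≠ ⊥) ∧ ∃ x, φ x ≠ ⊤

/-- Convexity via the epigraph. -/
def ConvexFn (φ : E → EReal) : Prop := Convex ℝ {p : E × ℝ | φ p.1 ≤ (p.2 : EReal)}

/-- Fenchel conjugate. -/
def conjFn (φ : E → EReal) (v : E) : EReal := ⨆ x, ((⟪v, x⟫ : ℝ) : EReal) - φ x

/-- Second subderivative. -/
def secondSubderiv (φ : E → EReal) (x v w : E) : EReal :=
  Filter.liminf (fun p : ℝ × E =>
    (((2 / p.1 ^ 2 : ℝ)) : EReal) *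
      (φ (x + p.1 • p.2) - φ x - ((p.1 * ⟪v, p.2⟫ : ℝ) : EReal)))
    ((𝓝[>] (0 : ℝ)) ×ˢ 𝓝 w)

/-- Quadratic growth condition at `x` for `v`. -/
def QuadGrowth (φ : E → EReal) (x v : E) : Prop :=
  ∃ c : ℝ, 0 < c ∧ ∃ ε : ℝ, 0 < ε ∧ ∀ u ∈ ball x ε,
    φ x + ((⟪v, u - x⟫ + c / 2 * (infDist u {u' | v ∈ subdiff φ u'}) ^ 2 : ℝ) : EReal) ≤ φ u



/-! The set `S = (∂φ)⁻¹(v̄)` is where `φ` touches its affine minorant `a + ⟪v̄, · - x̄⟫`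
(`a = φ x̄`), so the second-order difference quotients vanish along `S` and
`T_S(x̄) ⊆ ker d²φ(x̄|v̄)`. Conversely, quadratic growth bounds the quotient at `(t, w)` from below
by `c (d(x̄ + t w, S) / t)²`, so kernel directions are tangent to `S`.

Since `S ⊆ ∂φ*(v̄)`, it remains to go back from `∂φ*(v̄)` to `S`. By Hahn–Banach every
`x ∈ ∂φ*(v̄)` yields the point `(x, ⟪v̄, x⟫ - φ*(v̄))` of the closed epigraph of `φ`; passing the
quadratic growth inequality to this limit point gives `d(x, S) = 0` for `x` near `x̄`. Tangent cones
do not distinguish a set from its closure near the base point, so `T_{∂φ*(v̄)}(x̄) = T_S(x̄)`. -/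

section TangentCone

variable {G : Type*} [AddCommGroup G] [Module ℝ G] [TopologicalSpace G] {s s' : Set G} {x w : G}

theorem tanCone_mono (h : s ⊆ s') : tanCone s x ⊆ tanCone s' x := by
  rintro w ⟨t, wk, ht0, ht, hwk, hmem⟩
  exact ⟨t, wk, ht0, ht, hwk, fun n => h (hmem n)⟩

theorem mem_tanCone_of_eventually {t : ℕ → ℝ} {wk : ℕ → G} (ht0 : ∀ᶠ n in atTop, 0 < t n)
    (ht : Tendsto t atTop (𝓝 0)) (hwk : Tendsto wk atTop (𝓝 w))
    (hs : ∀ᶠ n in atTop, x + t n • wk n ∈ s) : w ∈ tanCone s x := by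
  obtain ⟨N, hN⟩ := (ht0.and hs).exists_forall_of_atTop
  exact ⟨fun n => t (n + N), fun n => wk (n + N), fun n => (hN _ (Nat.le_add_left N n)).1,
    ht.comp (tendsto_add_atTop_nat N), hwk.comp (tendsto_add_atTop_nat N),
    fun n => (hN _ (Nat.le_add_left N n)).2⟩

end TangentCone

section NormedTangentCone

variable {G : Type*} [NormedAddCommGroup G] [NormedSpace ℝ G] {s s' : Set G} {x w : G}

theorem tendsto_add_smul_of_tendsto_zero {ι : Type*} {l : Filter ι} {t : ι → ℝ} {wk : ι → G}
    (ht : Tendsto t l (𝓝 0)) (hwk : Tendsto wk l (𝓝 w)) :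
    Tendsto (fun i => x + t i • wk i) l (𝓝 x) := by
  simpa using tendsto_const_nhds.add (ht.smul hwk)

theorem mem_tanCone_of_tendsto_infDist (hs : s.Nonempty) {t : ℕ → ℝ} {wk : ℕ → G}
    (ht0 : ∀ᶠ n in atTop, 0 < t n) (ht : Tendsto t atTop (𝓝 0)) (hwk : Tendsto wk atTop (𝓝 w))
    (hd : Tendsto (fun n => infDist (x + t n • wk n) s / t n) atTop (𝓝 0)) :
    w ∈ tanCone s x := by
  have hnear : ∀ n, ∃ u ∈ s, 0 < t n →
      dist (x + t n • wk n) u < infDist (x + t n • wk n) s + t n ^ 2 := by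
    intro n
    by_cases htn : 0 < t n
    · obtain ⟨u, hu, hdu⟩ := (infDist_lt_iff hs).1 (lt_add_of_pos_right _ (pow_pos htn 2))
      exact ⟨u, hu, fun _ => hdu⟩
    · obtain ⟨u, hu⟩ := hs
      exact ⟨u, hu, fun h => absurd h htn⟩
  choose u hus hud using hnear
  have hdiff : ∀ n, t n ≠ 0 → wk n - (t n)⁻¹ • (u n - x) = (t n)⁻¹ • (x + t n • wk n - u n) := by
    intro n hn
    rw [smul_sub, smul_sub, smul_add, inv_smul_smul₀ hn]
    abel
  have hdist : ∀ᶠ n in atTop,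
      dist (wk n) ((t n)⁻¹ • (u n - x)) ≤ infDist (x + t n • wk n) s / t n + t n := by
    filter_upwards [ht0] with n hn
    rw [dist_eq_norm, hdiff n hn.ne', norm_smul, norm_inv, Real.norm_of_nonneg hn.le,
      ← dist_eq_norm, inv_mul_eq_div, div_le_iff₀ hn, add_mul, div_mul_cancel₀ _ hn.ne', ← sq]
    exact (hud n hn).le
  refine mem_tanCone_of_eventually (wk := fun n => (t n)⁻¹ • (u n - x)) ht0 ht
    (tendsto_of_tendsto_of_dist hwk ?_) ?_
  · refine squeeze_zero' (.of_forall fun n => dist_nonneg) hdist ?_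
    simpa using hd.add ht
  · filter_upwards [ht0] with n hn
    rw [smul_inv_smul₀ hn.ne', add_sub_cancel]
    exact hus n

theorem tanCone_subset_of_eventually_mem_closure (hs : s.Nonempty)
    (h : ∀ᶠ y in 𝓝 x, y ∈ s' → y ∈ closure s) : tanCone s' x ⊆ tanCone s x := by
  rintro w ⟨t, wk, ht0, ht, hwk, hmem⟩
  refine mem_tanCone_of_tendsto_infDist hs (.of_forall ht0) ht hwk (tendsto_const_nhds.congr' ?_)
  filter_upwards [(tendsto_add_smul_of_tendsto_zero ht hwk).eventually h] with n hn
  rw [(mem_closure_iff_infDist_zero hs).1 (hn (hmem n)), zero_div]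

end NormedTangentCone

section Subdifferential

variable {φ : E → EReal} {x u v : E} {a : ℝ}

theorem le_of_mem_subdiff (hv : v ∈ subdiff φ x) (ha : φ x = a) (y : E) :
    ((a + ⟪v, y - x⟫ : ℝ) : EReal) ≤ φ y := by
  simpa [ha] using hv y

theorem ne_top_of_mem_subdiff (hv : v ∈ subdiff φ x) (hφ : ∃ y, φ y ≠ ⊤) : φ x ≠ ⊤ := by
  obtain ⟨y, hy⟩ := hφ
  intro hx
  simpa [hx, hy] using hv y

theorem mem_subdiff_iff_eq (hv : v ∈ subdiff φ x) (ha : φ x = a) :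
    v ∈ subdiff φ u ↔ φ u = ((a + ⟪v, u - x⟫ : ℝ) : EReal) := by
  refine ⟨fun hu => le_antisymm ?_ (le_of_mem_subdiff hv ha u), fun hu y => ?_⟩
  · have h := hu x
    generalize φ u = b at h ⊢
    induction b using EReal.rec with
    | bot => exact bot_le
    | top => simp [ha] at h
    | coe b =>
      rw [ha] at h
      have : ⟪v, x - u⟫ = -⟪v, u - x⟫ := by rw [← inner_neg_right, neg_sub]
      exact_mod_cast (show b ≤ a + ⟪v, u - x⟫ by norm_cast at h; linarith)
  · calc φ u + ((⟪v, y - u⟫ : ℝ) : EReal) = ((a + ⟪v, y - x⟫ : ℝ) : EReal) := by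
          rw [hu, ← EReal.coe_add, add_assoc, ← inner_add_right, sub_add_sub_cancel']
      _ ≤ φ y := le_of_mem_subdiff hv ha y

end Subdifferential

section Conjugate

variable {φ : E → EReal} {x y v : E} {a : ℝ}

theorem coe_sub_le_conjFn {q : E} {α : ℝ} (hq : φ q ≤ α) :
    ((⟪y, q⟫ - α : ℝ) : EReal) ≤ conjFn φ y :=
  (EReal.sub_le_sub le_rfl hq).trans (le_iSup (fun q => ((⟪y, q⟫ : ℝ) : EReal) - φ q) q)

theorem conjFn_le_of_forall_epigraph {B : ℝ} (h : ∀ q (α : ℝ), φ q ≤ α → ⟪y, q⟫ - α ≤ B) :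
    conjFn φ y ≤ B := by
  refine iSup_le fun q => ?_
  specialize h q
  generalize φ q = b at h ⊢
  induction b using EReal.rec with
  | bot => linarith [h (⟪y, q⟫ - B - 1) bot_le]
  | top => simp
  | coe b => exact_mod_cast h b le_rfl

theorem conjFn_eq_of_mem_subdiff (hv : v ∈ subdiff φ x) (ha : φ x = a) :
    conjFn φ v = ((⟪v, x⟫ - a : ℝ) : EReal) := by
  refine le_antisymm (conjFn_le_of_forall_epigraph fun q α hq => ?_) (coe_sub_le_conjFn ha.le)
  have : a + ⟪v, q - x⟫ ≤ α := by exact_mod_cast (le_of_mem_subdiff hv ha q).trans hq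
  rw [inner_sub_right] at this
  linarith

theorem mem_subdiff_conjFn_of_mem_subdiff (hv : v ∈ subdiff φ x) (ha : φ x = a) :
    x ∈ subdiff (conjFn φ) v := by
  intro y
  rw [conjFn_eq_of_mem_subdiff hv ha, ← EReal.coe_add]
  refine le_trans (le_of_eq ?_) (coe_sub_le_conjFn ha.le)
  rw [inner_sub_right, real_inner_comm x v, real_inner_comm x y]
  congr 1
  ring

end Conjugate

section Closure

variable [CompleteSpace E] {φ : E → EReal} {x v : E} {a : ℝ}

theorem exists_inner_add_mul_eq (f : E × ℝ →L[ℝ] ℝ) :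
    ∃ (z : E) (s : ℝ), ∀ q α, f (q, α) = ⟪z, q⟫ + s * α := by
  refine ⟨(InnerProductSpace.toDual ℝ E).symm (f.comp (ContinuousLinearMap.inl ℝ E ℝ)), f (0, 1),
    fun q α => ?_⟩
  rw [InnerProductSpace.toDual_symm_apply, ContinuousLinearMap.comp_apply,
    ContinuousLinearMap.inl_apply, mul_comm, ← smul_eq_mul, ← map_smul, ← map_add]
  simp

theorem mem_closure_epigraph_of_mem_subdiff_conjFn (hconv : ConvexFn φ) {r : ℝ}
    (hr : conjFn φ v = r) (hx : x ∈ subdiff (conjFn φ) v) :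
    ((x, ⟪v, x⟫ - r) : E × ℝ) ∈ closure {p : E × ℝ | φ p.1 ≤ p.2} := by
  by_contra hnot
  obtain ⟨f, c, hf, hfx⟩ :=
    geometric_hahn_banach_closed_point hconv.closure isClosed_closure hnot
  obtain ⟨z, s, hfzs⟩ := exists_inner_add_mul_eq f
  -- Adding `lam` times the Fenchel–Young inequality `⟪v, q⟫ - α ≤ r` to the separation
  -- `⟪z, q⟫ + s α < c` on the epigraph gives `⟪lam • v + z, q⟫ - (lam - s) α < lam r + c` with
  -- `lam - s > 0`: an affine minorant of `φ` of slope `y`, which bounds `φ* y` and contradicts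
  -- the subgradient inequality of `φ*` at `v` in direction `y`.
  set lam := |s| + 1
  have hm : 0 < lam - s := by linarith [le_abs_self s]
  set y := (lam - s)⁻¹ • (lam • v + z)
  have hy : ∀ q, ⟪y, q⟫ = (lam * ⟪v, q⟫ + ⟪z, q⟫) / (lam - s) := by
    intro q
    rw [real_inner_smul_left, inner_add_left, real_inner_smul_left, inv_mul_eq_div]
  have hconj : conjFn φ y ≤ (((lam * r + c) / (lam - s) : ℝ) : EReal) := by
    refine conjFn_le_of_forall_epigraph fun q α hq => ?_
    have hv : ⟪v, q⟫ - α ≤ r := by exact_mod_cast hr ▸ coe_sub_le_conjFn hq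
    have hz : ⟪z, q⟫ + s * α < c := hfzs q α ▸ hf (q, α) (subset_closure hq)
    rw [hy, sub_le_iff_le_add, div_add' _ _ _ hm.ne', div_le_div_iff_of_pos_right hm]
    nlinarith [mul_le_mul_of_nonneg_left hv (by positivity : (0 : ℝ) ≤ lam)]
  have hxy : r + ⟪x, y - v⟫ ≤ (lam * r + c) / (lam - s) := by
    exact_mod_cast hr ▸ (hx y).trans hconj
  rw [hfzs] at hfx
  rw [inner_sub_right, ← real_inner_comm x y, hy, ← real_inner_comm x v, le_div_iff₀ hm] at hxy
  have : (lam * ⟪v, x⟫ + ⟪z, x⟫) / (lam - s) * (lam - s) = lam * ⟪v, x⟫ + ⟪z, x⟫ :=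
    div_mul_cancel₀ _ hm.ne'
  nlinarith

theorem eventually_mem_closure_of_mem_subdiff_conjFn (hconv : ConvexFn φ)
    (hv : v ∈ subdiff φ x) (ha : φ x = a) (hqg : QuadGrowth φ x v) :
    ∀ᶠ y in 𝓝 x, y ∈ subdiff (conjFn φ) v → y ∈ closure {u | v ∈ subdiff φ u} := by
  obtain ⟨c, hc, ε, hε, hgrowth⟩ := hqg
  set S := {u | v ∈ subdiff φ u}
  filter_upwards [ball_mem_nhds x hε] with y hy hyv
  have hcl := mem_closure_epigraph_of_mem_subdiff_conjFn hconv (conjFn_eq_of_mem_subdiff hv ha) hyv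
  set K := {p : E × ℝ | a + ⟪v, p.1 - x⟫ + c / 2 * infDist p.1 S ^ 2 ≤ p.2}
  have hK : IsClosed K := isClosed_le (by fun_prop) continuous_snd
  have hU : IsOpen (ball x ε ×ˢ (univ : Set ℝ)) := isOpen_ball.prod isOpen_univ
  have hepiK : ball x ε ×ˢ univ ∩ {p : E × ℝ | φ p.1 ≤ p.2} ⊆ K := by
    rintro ⟨u, α⟩ ⟨⟨hu, -⟩, hα⟩
    have := (hgrowth u hu).trans hα
    rw [ha] at this
    have : a + (⟪v, u - x⟫ + c / 2 * infDist u S ^ 2) ≤ α := by exact_mod_cast this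
    exact (add_assoc _ _ _).trans_le this
  have hyK : (y, ⟪v, y⟫ - (⟪v, x⟫ - a)) ∈ K :=
    closure_minimal hepiK hK (hU.inter_closure ⟨⟨hy, trivial⟩, hcl⟩)
  simp only [K, mem_ofPred_eq, inner_sub_right] at hyK
  have hsq : infDist y S ^ 2 ≤ 0 := by nlinarith
  exact (mem_closure_iff_infDist_zero ⟨x, hv⟩).2 (pow_eq_zero_iff two_ne_zero |>.1
    (le_antisymm hsq (sq_nonneg _)))

end Closure

section SecondSubderivative

variable {φ : E → EReal} {x v w : E} {a : ℝ}

def secondDiffQuot (φ : E → EReal) (x v : E) (p : ℝ × E) : EReal :=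
  ((2 / p.1 ^ 2 : ℝ) : EReal) * (φ (x + p.1 • p.2) - φ x - ((p.1 * ⟪v, p.2⟫ : ℝ) : EReal))

theorem secondSubderiv_eq_liminf :
    secondSubderiv φ x v w = liminf (secondDiffQuot φ x v) ((𝓝[>] 0) ×ˢ 𝓝 w) :=
  rfl

theorem le_secondDiffQuot (ha : φ x = a) {t β : ℝ} (ht : 0 < t)
    (h : ((a + t * ⟪v, w⟫ + t ^ 2 / 2 * β : ℝ) : EReal) ≤ φ (x + t • w)) :
    (β : EReal) ≤ secondDiffQuot φ x v (t, w) := by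
  simp only [secondDiffQuot, ha]
  generalize φ (x + t • w) = b at h ⊢
  induction b using EReal.rec with
  | bot => exact absurd (le_bot_iff.1 h) (EReal.coe_ne_bot _)
  | top =>
    rw [EReal.top_sub_coe, EReal.top_sub_coe, EReal.coe_mul_top_of_pos (by positivity)]
    exact le_top
  | coe b =>
    have h : a + t * ⟪v, w⟫ + t ^ 2 / 2 * β ≤ b := by exact_mod_cast h
    have : β ≤ 2 / t ^ 2 * (b - a - t * ⟪v, w⟫) := by
      rw [div_mul_eq_mul_div, le_div_iff₀ (by positivity)]
      linarith
    exact_mod_cast this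

theorem secondDiffQuot_eq_zero (hv : v ∈ subdiff φ x) (ha : φ x = a) {t : ℝ}
    (h : v ∈ subdiff φ (x + t • w)) : secondDiffQuot φ x v (t, w) = 0 := by
  rw [mem_subdiff_iff_eq hv ha, add_sub_cancel_left, real_inner_smul_right] at h
  simp only [secondDiffQuot, h, ha]
  norm_cast
  simp

theorem secondSubderiv_nonneg (hv : v ∈ subdiff φ x) (ha : φ x = a) (w : E) :
    0 ≤ secondSubderiv φ x v w := by
  refine le_liminf_of_le (by isBoundedDefault) ?_
  filter_upwards [(eventually_mem_nhdsWithin : ∀ᶠ t in 𝓝[>] (0 : ℝ), 0 < t).prod_inl (𝓝 w)]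
    with p hp
  refine EReal.coe_zero ▸ le_secondDiffQuot ha hp ?_
  simpa [add_sub_cancel_left, real_inner_smul_right] using le_of_mem_subdiff hv ha (x + p.1 • p.2)

theorem secondSubderiv_eq_zero_of_mem_tanCone (hv : v ∈ subdiff φ x) (ha : φ x = a)
    (hw : w ∈ tanCone {u | v ∈ subdiff φ u} x) : secondSubderiv φ x v w = 0 := by
  obtain ⟨t, wk, ht0, ht, hwk, hmem⟩ := hw
  have htend : Tendsto (fun n => (t n, wk n)) atTop ((𝓝[>] 0) ×ˢ 𝓝 w) :=
    (tendsto_nhdsWithin_iff.2 ⟨ht, .of_forall ht0⟩).prodMk hwk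
  refine le_antisymm (liminf_le_of_frequently_le ?_ (by isBoundedDefault))
    (secondSubderiv_nonneg hv ha w)
  exact htend.frequently (.of_forall fun n => (secondDiffQuot_eq_zero hv ha (hmem n)).le)

theorem mem_tanCone_of_secondSubderiv_eq_zero (hv : v ∈ subdiff φ x) (ha : φ x = a)
    (hqg : QuadGrowth φ x v) (hw : secondSubderiv φ x v w = 0) :
    w ∈ tanCone {u | v ∈ subdiff φ u} x := by
  obtain ⟨c, hc, ε, hε, hgrowth⟩ := hqg
  set S := {u | v ∈ subdiff φ u}
  obtain ⟨p, hq, hp⟩ := exists_seq_tendsto_liminf (f := (𝓝[>] (0 : ℝ)) ×ˢ 𝓝 w)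
    (u := secondDiffQuot φ x v)
  rw [← secondSubderiv_eq_liminf, hw] at hq
  have ht : Tendsto (fun n => (p n).1) atTop (𝓝[>] 0) := tendsto_fst.comp hp
  have hwk : Tendsto (fun n => (p n).2) atTop (𝓝 w) := tendsto_snd.comp hp
  have ht0 : ∀ᶠ n in atTop, 0 < (p n).1 := ht.eventually eventually_mem_nhdsWithin
  have ht' := tendsto_nhds_of_tendsto_nhdsWithin ht
  set r := fun n => infDist (x + (p n).1 • (p n).2) S / (p n).1
  have hbound : ∀ᶠ n in atTop, ((c * r n ^ 2 : ℝ) : EReal) ≤ secondDiffQuot φ x v (p n) := by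
    filter_upwards [ht0, (tendsto_add_smul_of_tendsto_zero ht' hwk).eventually
      (ball_mem_nhds x hε)] with n hn hball
    refine le_secondDiffQuot ha hn ((le_of_eq ?_).trans (hgrowth _ hball))
    rw [ha, ← EReal.coe_add, add_sub_cancel_left, real_inner_smul_right, div_pow]
    congr 1
    field_simp
    ring
  have hr2 : Tendsto (fun n => c * r n ^ 2) atTop (𝓝 0) := by
    refine EReal.tendsto_coe.1 (tendsto_of_tendsto_of_tendsto_of_le_of_le' tendsto_const_nhds hq
      (.of_forall fun n => ?_) hbound)
    exact_mod_cast by positivity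
  have hr : Tendsto r atTop (𝓝 0) := by
    have hr2' : Tendsto (fun n => r n ^ 2) atTop (𝓝 0) := by
      simpa [hc.ne'] using hr2.const_mul c⁻¹
    have habs := hr2'.sqrt
    rw [Real.sqrt_zero] at habs
    simp only [Real.sqrt_sq_eq_abs] at habs
    exact (tendsto_zero_iff_abs_tendsto_zero r).2 habs
  exact mem_tanCone_of_tendsto_infDist ⟨x, hv⟩ ht0 ht' hwk hr

end SecondSubderivative

/-- under the quadratic growth condition, the kernel of the second
subderivative equals the tangent cone to `∂φ*(vb)` at `xb`. -/
theorem stmt6 {E : Type*} [NormedAddCommGroup E] [InnerProductSpace ℝ E]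
    [FiniteDimensional ℝ E]
    (φ : E → EReal) (hproper : ProperFn φ) (hconv : ConvexFn φ)
    (xb vb : E) (hsub : vb ∈ subdiff φ xb) (hqg : QuadGrowth φ xb vb) :
    {w | secondSubderiv φ xb vb w = 0} = tanCone (subdiff (conjFn φ) vb) xb := by
  obtain ⟨a, ha⟩ : ∃ a : ℝ, φ xb = a :=
    ⟨_, (EReal.coe_toReal (ne_top_of_mem_subdiff hsub hproper.2) (hproper.1 xb)).symm⟩
  have hS : {u | vb ∈ subdiff φ u} ⊆ subdiff (conjFn φ) vb := fun u hu =>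
    mem_subdiff_conjFn_of_mem_subdiff hu ((mem_subdiff_iff_eq hsub ha).1 hu)
  ext w
  constructor
  · intro hw
    exact tanCone_mono hS (mem_tanCone_of_secondSubderiv_eq_zero hsub ha hqg hw)
  · intro hw
    exact secondSubderiv_eq_zero_of_mem_tanCone hsub ha (tanCone_subset_of_eventually_mem_closure
      ⟨xb, hsub⟩ (eventually_mem_closure_of_mem_subdiff_conjFn hconv hsub ha hqg) hw)

end
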